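/- Let τ > 0, N a natural number, and for k = 1,…,N let E_k⁰, E_k¹ : ℝ → ℝ be continuous functions; let Ψ_N be the NuFI composite map of the corresponding backward Störmer–Verlet steps. Let f₀ : ℝ × ℝ → ℝ be measurable. Then the essential supremum (with respect to the volume measure on ℝ × ℝ) of f₀ ∘ Ψ_N equals the essential supremum of f₀; in particular, if 0 ≤ f₀ ≤ M pointwise for some constant M, then 0 ≤ f₀(Ψ_N(x,v)) ≤ M for all (x,v) (maximum principle for the NuFI discrete solution). -/
import Mathlib

open MeasureTheory

/-- The backward Störmer–Verlet step for the Vlasov–Poisson characteristics. -/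
noncomputable def svStep (τ : ℝ) (E0 E1 : ℝ → ℝ) : ℝ × ℝ → ℝ × ℝ :=
  fun p =>
    let vhalf := p.2 + (τ / 2) * E1 p.1
    let x1 := p.1 - τ * vhalf
    (x1, vhalf + (τ / 2) * E0 x1)

/-- The NuFI composite map `Ψ_N = Ψ⁽¹⁾ ∘ Ψ⁽²⁾ ∘ ⋯ ∘ Ψ⁽ᴺ⁾`. -/
noncomputable def nufiComp (τ : ℝ) (E0 E1 : ℕ → ℝ → ℝ) : ℕ → (ℝ × ℝ → ℝ × ℝ)
  | 0 => id
  | n + 1 => nufiComp τ E0 E1 n ∘ svStep τ (E0 (n + 1)) (E1 (n + 1))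

/-- Vertical shear as a measurable equivalence. -/
def shearSndEquiv (g : ℝ → ℝ) (hg : Measurable g) : (ℝ × ℝ) ≃ᵐ (ℝ × ℝ) where
  toFun := fun p => (p.1, p.2 + g p.1)
  invFun := fun p => (p.1, p.2 - g p.1)
  left_inv := fun p => by simp
  right_inv := fun p => by simp
  measurable_toFun := measurable_fst.prodMk (measurable_snd.add (hg.comp measurable_fst))
  measurable_invFun := measurable_fst.prodMk (measurable_snd.sub (hg.comp measurable_fst))

/-- Horizontal shear as a measurable equivalence. -/
def shearFstEquiv (c : ℝ) : (ℝ × ℝ) ≃ᵐ (ℝ × ℝ) where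
  toFun := fun p => (p.1 + c * p.2, p.2)
  invFun := fun p => (p.1 - c * p.2, p.2)
  left_inv := fun p => by simp
  right_inv := fun p => by simp
  measurable_toFun := (measurable_fst.add (measurable_snd.const_mul c)).prodMk measurable_snd
  measurable_invFun := (measurable_fst.sub (measurable_snd.const_mul c)).prodMk measurable_snd

lemma shearSnd_measurePreserving (g : ℝ → ℝ) (hg : Measurable g) :
    MeasurePreserving (fun p : ℝ × ℝ => (p.1, p.2 + g p.1)) volume volume := by
  rw [Measure.volume_eq_prod]
  refine (MeasurePreserving.id volume).skew_product (g := fun x y => y + g x) ?_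
    (Filter.Eventually.of_forall fun x => map_add_right_eq_self volume (g x))
  exact measurable_snd.add (hg.comp measurable_fst)

lemma shearFst_measurePreserving (c : ℝ) :
    MeasurePreserving (fun p : ℝ × ℝ => (p.1 + c * p.2, p.2)) volume volume := by
  have hswap : MeasurePreserving (Prod.swap : ℝ × ℝ → ℝ × ℝ) volume volume := by
    rw [Measure.volume_eq_prod]; exact Measure.measurePreserving_swap
  have h := shearSnd_measurePreserving (fun v => c * v) (measurable_const_mul c)
  have heq : (fun p : ℝ × ℝ => (p.1 + c * p.2, p.2))
      = Prod.swap ∘ (fun p : ℝ × ℝ => (p.1, p.2 + c * p.1)) ∘ Prod.swap := by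
    funext p; simp [Prod.swap]
  rw [heq]
  exact (hswap.comp h).comp hswap

/-- The Störmer–Verlet step as a measurable equivalence. -/
noncomputable def svEquiv (τ : ℝ) (E0 E1 : ℝ → ℝ) (h0 : Measurable E0) (h1 : Measurable E1) :
    (ℝ × ℝ) ≃ᵐ (ℝ × ℝ) :=
  (shearSndEquiv (fun x => (τ / 2) * E1 x) (h1.const_mul _)).trans
    ((shearFstEquiv (-τ)).trans (shearSndEquiv (fun x => (τ / 2) * E0 x) (h0.const_mul _)))

lemma svEquiv_coe (τ : ℝ) (E0 E1 : ℝ → ℝ) (h0 : Measurable E0) (h1 : Measurable E1) :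
    ⇑(svEquiv τ E0 E1 h0 h1) = svStep τ E0 E1 := by
  funext p
  simp only [svEquiv, svStep, MeasurableEquiv.trans_apply, shearSndEquiv, shearFstEquiv,
    MeasurableEquiv.coe_mk, Equiv.coe_fn_mk]
  rw [neg_mul, ← sub_eq_add_neg]

lemma svStep_measurePreserving (τ : ℝ) (E0 E1 : ℝ → ℝ) (h0 : Measurable E0)
    (h1 : Measurable E1) :
    MeasurePreserving (svStep τ E0 E1) volume volume := by
  have key : svStep τ E0 E1
      = (fun p : ℝ × ℝ => (p.1, p.2 + (τ/2) * E0 p.1)) ∘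
        (fun p : ℝ × ℝ => (p.1 + (-τ) * p.2, p.2)) ∘
        (fun p : ℝ × ℝ => (p.1, p.2 + (τ/2) * E1 p.1)) := by
    funext p
    simp only [svStep, Function.comp_apply]
    rw [neg_mul, ← sub_eq_add_neg]
  rw [key]
  exact ((shearSnd_measurePreserving _ (h0.const_mul _)).comp
    (shearFst_measurePreserving (-τ))).comp
    (shearSnd_measurePreserving _ (h1.const_mul _))

lemma svStep_map_ae (τ : ℝ) (E0 E1 : ℝ → ℝ) (h0 : Measurable E0) (h1 : Measurable E1) :
    Filter.map (svStep τ E0 E1) (ae volume) = ae volume := by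
  rw [← svEquiv_coe τ E0 E1 h0 h1, MeasurableEquiv.map_ae,
    svEquiv_coe τ E0 E1 h0 h1, (svStep_measurePreserving τ E0 E1 h0 h1).map_eq]

lemma nufiComp_map_ae (τ : ℝ) (N : ℕ) (E0 E1 : ℕ → ℝ → ℝ)
    (hE0 : ∀ k, 1 ≤ k → k ≤ N → Continuous (E0 k))
    (hE1 : ∀ k, 1 ≤ k → k ≤ N → Continuous (E1 k)) :
    Filter.map (nufiComp τ E0 E1 N) (ae volume) = ae volume := by
  induction N with
  | zero => simp [nufiComp]
  | succ n ih =>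
    have ih' := ih (fun k h1 h2 => hE0 k h1 (h2.trans n.le_succ))
      (fun k h1 h2 => hE1 k h1 (h2.trans n.le_succ))
    have hstep := svStep_map_ae τ (E0 (n+1)) (E1 (n+1))
      ((hE0 (n+1) (Nat.succ_le_succ n.zero_le) le_rfl).measurable)
      ((hE1 (n+1) (Nat.succ_le_succ n.zero_le) le_rfl).measurable)
    show Filter.map (nufiComp τ E0 E1 n ∘ svStep τ (E0 (n+1)) (E1 (n+1))) (ae volume)
      = ae volume
    rw [← Filter.map_map, hstep, ih']

/-- Maximum principle for the NuFI discrete solution: the essential supremum of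
`f₀ ∘ Ψ_N` equals that of `f₀`, and pointwise bounds are preserved. -/
theorem nufi_maximum_principle (τ : ℝ) (hτ : 0 < τ) (N : ℕ) (E0 E1 : ℕ → ℝ → ℝ)
    (hE0 : ∀ k, 1 ≤ k → k ≤ N → Continuous (E0 k))
    (hE1 : ∀ k, 1 ≤ k → k ≤ N → Continuous (E1 k))
    (f₀ : ℝ × ℝ → ℝ) (hf₀ : Measurable f₀) :
    essSup (fun p : ℝ × ℝ => f₀ (nufiComp τ E0 E1 N p)) (volume : Measure (ℝ × ℝ))
        = essSup f₀ (volume : Measure (ℝ × ℝ)) ∧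
      ∀ M : ℝ, (∀ p : ℝ × ℝ, 0 ≤ f₀ p ∧ f₀ p ≤ M) →
        ∀ p : ℝ × ℝ, 0 ≤ f₀ (nufiComp τ E0 E1 N p) ∧ f₀ (nufiComp τ E0 E1 N p) ≤ M := by
  refine ⟨?_, fun M hM p => hM _⟩
  have hae := nufiComp_map_ae τ N E0 E1 hE0 hE1
  calc essSup (fun p : ℝ × ℝ => f₀ (nufiComp τ E0 E1 N p)) volume
      = Filter.limsSup (Filter.map f₀ (Filter.map (nufiComp τ E0 E1 N) (ae volume))) := by
        rw [Filter.map_map]; rfl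
    _ = essSup f₀ volume := by rw [hae]; rfl
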